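/- arXiv:0912.4875 — 2 statements merged into one kernel-verified Lean document; each statement's English description precedes it below -/
import Mathlib

section
/- For every integer w, the q-expansion map from the space of level-one modular forms of weight w to ℂ[[q]], sending f to ∑_{n≥0} aₙ(f) qⁿ, is injective; that is, two level-one modular forms of the same weight with equal q-expansions are equal. -/
open scoped CongruenceSubgroup

open Complex

noncomputable section

/-- The `n`-th `q`-expansion coefficient of a level-one modular form `f` of weight `w`,
defined as the `n`-th Taylor coefficient at `0` of the associated cusp function
(the analytic function `F` with `f τ = F (exp (2 π i τ))`). -/
def qcoeff {w : ℤ} (f : ModularForm Γ(1) w) (n : ℕ) : ℂ :=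
  iteratedDeriv n (UpperHalfPlane.cuspFunction 1 f) 0 / n.factorial

/-- the q-expansion map on level-one modular forms of any weight `w` is
injective: two forms with the same q-expansion coefficients are equal. -/
theorem qExpansion_injective (w : ℤ) (f g : ModularForm Γ(1) w)
    (h : ∀ n : ℕ, qcoeff f n = qcoeff g n) : f = g := by
  have hd : ∀ n, iteratedDeriv n (UpperHalfPlane.cuspFunction 1 f) 0 =
      iteratedDeriv n (UpperHalfPlane.cuspFunction 1 g) 0 := by
    intro n
    have := h n
    unfold qcoeff at this
    exact (div_left_inj' (Nat.cast_ne_zero.mpr n.factorial_ne_zero)).mp this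
  have hΓ : (1 : ℝ) ∈ (Subgroup.map (Matrix.SpecialLinearGroup.mapGL ℝ) Γ(1)).strictPeriods := by
    simpa [CongruenceSubgroup.Gamma_one_top, ← MonoidHom.range_eq_map] using one_mem_strictPeriods_SL
  have hdf : DifferentiableOn ℂ (UpperHalfPlane.cuspFunction 1 f) (Metric.ball 0 1) :=
    fun q hq ↦ (ModularFormClass.differentiableAt_cuspFunction f one_pos hΓ
      (by simpa [Metric.mem_ball] using hq)).differentiableWithinAt
  have hdg : DifferentiableOn ℂ (UpperHalfPlane.cuspFunction 1 g) (Metric.ball 0 1) :=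
    fun q hq ↦ (ModularFormClass.differentiableAt_cuspFunction g one_pos hΓ
      (by simpa [Metric.mem_ball] using hq)).differentiableWithinAt
  have key : ∀ q ∈ Metric.ball (0:ℂ) 1, UpperHalfPlane.cuspFunction 1 f q =
      UpperHalfPlane.cuspFunction 1 g q := by
    intro q hq
    rw [← taylorSeries_eq_on_ball' hq hdf, ← taylorSeries_eq_on_ball' hq hdg]
    simp_rw [hd]
  ext τ
  have h1 : ‖Function.Periodic.qParam 1 (τ : ℂ)‖ < 1 := by
    have := (Function.Periodic.norm_qParam_lt_iff one_pos 0 (τ : ℂ)).mpr τ.2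
    simpa using this
  have hf := SlashInvariantFormClass.eq_cuspFunction f τ hΓ one_ne_zero
  have hg := SlashInvariantFormClass.eq_cuspFunction g τ hΓ one_ne_zero
  rw [← hf, ← hg]
  exact key _ (by simpa [Metric.mem_ball] using h1)
end
end

section
/- In the ring A[[x]] with A = ℚ[[q]], the following identity of formal power series holds: letting s(x) ∈ ℚ[[x]] ⊆ A[[x]] be the power series of sinh(x/2)/(x/2) (which has constant term 1 and hence is invertible), and for each n ≥ 1 letting u_n := (1 − qⁿ)² · ((1 − qⁿ·eˣ)(1 − qⁿ·e^{−x}))^{−1} ∈ A[[x]] (each factor 1 − qⁿ·e^{±x} is invertible in A[[x]] since its constant x-coefficient 1 − qⁿ is invertible in ℚ[[q]]), the infinite product s(x)^{−1} · ∏_{n≥1} u_n converges in the coefficientwise (product) topology on A[[x]] and equals exp( G₂·x² + ∑_{k≥2} (2/(2k)!)·G_{2k}·x^{2k} ), where for every k ≥ 1, G_{2k} := −B_{2k}/(4k) + ∑_{n≥1} σ_{2k−1}(n) qⁿ ∈ ℚ[[q]]. -/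
noncomputable section

open PowerSeries

/-- The coefficient ring `A = ℚ[[q]]`. -/
abbrev A := PowerSeries ℚ

/-- The ring `A[[x]] = ℚ[[q]][[x]]`. -/
abbrev B := PowerSeries A

/-- `G_w = -B_w/(2w) + ∑_{n ≥ 1} σ_{w-1}(n) qⁿ ∈ ℚ[[q]]` (for `w = 2k` this is
`-B_{2k}/(4k) + ∑_{n ≥ 1} σ_{2k-1}(n) qⁿ`), where `B_w` is the `w`-th Bernoulli number and
`σ_{w-1}(n)` is the sum of the `(w-1)`-st powers of the positive divisors of `n`. -/
def G (w : ℕ) : A :=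
  PowerSeries.mk fun n => if n = 0 then -(bernoulli w) / (2 * w)
    else ∑ d ∈ n.divisors, (d : ℚ) ^ (w - 1)

/-- The exponent `G₂·x² + ∑_{k ≥ 2} (2/(2k)!)·G_{2k}·x^{2k} ∈ A[[x]]`; note that `2/2! = 1`,
so the coefficient of `x^{2k}` is `(2/(2k)!)·G_{2k}` uniformly for all `k ≥ 1`. -/
def expArg : B :=
  PowerSeries.mk fun j => if 2 ≤ j ∧ j % 2 = 0 then (2 / (j.factorial : ℚ)) • G j else 0

/-- The formal exponential `exp(g) = ∑_{n ≥ 0} gⁿ/n!` of a power series `g ∈ A[[x]]` with zero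
constant term: its `x^d`-coefficient is the (finite) sum `∑_{n ≤ d} (coeff of x^d in gⁿ)/n!`. -/
def formalExp (g : B) : B :=
  PowerSeries.mk fun d =>
    ∑ n ∈ Finset.range (d + 1), ((n.factorial : ℚ)⁻¹) • (PowerSeries.coeff (R := A) d (g ^ n))

/-- The power series of `sinh(x/2)/(x/2) ∈ ℚ[[x]] ⊆ A[[x]]`: its `x^j`-coefficient is
`(1/2)^j/(j+1)!` for even `j` and `0` for odd `j`; its constant term is `1`. -/
def sinhSeries : B :=
  PowerSeries.mk fun j =>
    if j % 2 = 0 then algebraMap ℚ A (((1 : ℚ) / 2) ^ j / ((j + 1).factorial : ℚ)) else 0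

/-- The exponential power series `eˣ ∈ A[[x]]`. -/
def expX : B := PowerSeries.mk fun n => algebraMap ℚ A ((n.factorial : ℚ)⁻¹)

/-- The exponential power series `e^{-x} ∈ A[[x]]`. -/
def expNegX : B := PowerSeries.mk fun n => algebraMap ℚ A ((-1 : ℚ) ^ n / (n.factorial : ℚ))

/-- `u_n = (1 - qⁿ)² · ((1 - qⁿ·eˣ)(1 - qⁿ·e^{-x}))⁻¹ ∈ A[[x]]` (the inverse taken via
`Ring.inverse`; the element inverted is a unit, as asserted in the theorem below). -/
def u (n : ℕ) : B :=
  PowerSeries.C (R := A) ((1 - PowerSeries.X ^ n) ^ 2) *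
    Ring.inverse ((1 - PowerSeries.C (R := A) (PowerSeries.X ^ n) * expX) *
      (1 - PowerSeries.C (R := A) (PowerSeries.X ^ n) * expNegX))

/-- The partial product `s(x)⁻¹ · ∏_{n=1}^{M} u_n ∈ A[[x]]`. -/
def partialProd (M : ℕ) : B := Ring.inverse sinhSeries * ∏ n ∈ Finset.Icc 1 M, u n

lemma derivB_mul (f g : B) : d⁄dX A (f*g) = f * d⁄dX A g + g * d⁄dX A f :=
  derivativeFun_mul f g

lemma natCast_ne_zero_A (k : ℕ) : ((k+1 : ℕ) : A) ≠ 0 := by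
  intro h
  have := congrArg (constantCoeff (R := ℚ)) h
  rw [map_natCast, map_zero] at this
  exact Nat.cast_ne_zero.mpr (Nat.succ_ne_zero k) this

lemma eq_C_of_deriv_zero (H : B) (h : d⁄dX A H = 0) : H = C (R := A) (constantCoeff (R := A) H) := by
  ext n
  cases n with
  | zero => simp [coeff_zero_eq_constantCoeff]
  | succ n =>
    have h1 : coeff (R := A) n (d⁄dX A H) = 0 := by rw [h]; simp
    rw [coeff_derivative] at h1
    have h3 : ((n:A)+1) ≠ 0 := by
      have := natCast_ne_zero_A n
      simpa using this
    rcases mul_eq_zero.mp h1 with h | h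
    · rw [h]; simp
    · exact absurd h h3

lemma eq_of_deriv_eq (F G : B) (hG : IsUnit G)
    (h : d⁄dX A F * G = d⁄dX A G * F) (h0 : constantCoeff (R := A) F = constantCoeff (R := A) G) :
    F = G := by
  obtain ⟨g, rfl⟩ := hG
  have hD : d⁄dX A (F * ↑g⁻¹) = 0 := by
    rw [derivB_mul, derivative_inv]
    have hgg : (↑g⁻¹ : B) * ↑g = 1 := g.inv_mul
    have heq : F * (-(↑g⁻¹:B) ^ 2 * d⁄dX A ↑g) + (↑g⁻¹:B) * d⁄dX A F
        = (↑g⁻¹:B)^2 * (d⁄dX A F * ↑g - d⁄dX A ↑g * F) := by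
      have h2 : ((↑g⁻¹:B))^2 * (d⁄dX A F * ↑g) = ↑g⁻¹ * d⁄dX A F * (↑g⁻¹ * ↑g) := by ring
      rw [mul_sub, h2, hgg]
      ring
    rw [heq, h, sub_self, mul_zero]
  have hC := eq_C_of_deriv_zero _ hD
  have hcc : constantCoeff (R := A) (↑g⁻¹ : B) * constantCoeff (R := A) (↑g : B) = 1 := by
    rw [← map_mul, g.inv_mul, map_one]
  have hFg : F = C (R := A) (constantCoeff (R := A) (F * ↑g⁻¹)) * ↑g := by
    calc F = F * (↑g⁻¹ * ↑g) := by rw [g.inv_mul, mul_one]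
    _ = (F * ↑g⁻¹) * ↑g := by ring
    _ = C (R := A) (constantCoeff (R := A) (F * ↑g⁻¹)) * ↑g := by rw [← hC]
  have ha : constantCoeff (R := A) (F * ↑g⁻¹) = 1 := by
    rw [map_mul, h0, mul_comm]
    exact hcc
  rw [hFg, ha, map_one, one_mul]




lemma coeff_pow_zero (g : B) (hg : constantCoeff (R := A) g = 0) {j n : ℕ} (h : j < n) :
    coeff (R := A) j (g^n) = 0 := by
  have : (X : B)^n ∣ g^n := pow_dvd_pow_of_dvd (X_dvd_iff.mpr hg) n
  exact X_pow_dvd_iff.mp this j h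

lemma coeff_formalExp (g : B) (hg : constantCoeff (R := A) g = 0) (d N : ℕ) (hN : d < N) :
    coeff (R := A) d (formalExp g) = ∑ n ∈ Finset.range N, ((n.factorial : ℚ)⁻¹) • coeff (R := A) d (g ^ n) := by
  rw [formalExp, coeff_mk]
  apply Finset.sum_subset
  · exact Finset.range_subset_range.mpr hN
  · intro n _ hn
    rw [Finset.mem_range, not_lt] at hn
    rw [coeff_pow_zero g hg (Nat.lt_of_succ_le hn), smul_zero]

lemma constantCoeff_formalExp (g : B) : constantCoeff (R := A) (formalExp g) = 1 := by
  rw [← coeff_zero_eq_constantCoeff_apply, formalExp, coeff_mk]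
  simp

def partialSumExp (g : B) (N : ℕ) : B := ∑ n ∈ Finset.range N, ((n.factorial : ℚ)⁻¹) • g ^ n

lemma coeff_formalExp_eq_partialSum (g : B) (hg : constantCoeff (R := A) g = 0) {d N : ℕ} (hN : d < N) :
    coeff (R := A) d (formalExp g) = coeff (R := A) d (partialSumExp g N) := by
  rw [coeff_formalExp g hg d N hN, partialSumExp, map_sum]
  exact Finset.sum_congr rfl fun n _ => by rw [coeff_smul]

lemma derivB_smul (c : ℚ) (f : B) : d⁄dX A (c • f) = c • d⁄dX A f := by
  ext n
  rw [coeff_derivative, coeff_smul, coeff_smul, coeff_derivative, smul_mul_assoc]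

lemma derivB_pow (g : B) (n : ℕ) :
    d⁄dX A (g ^ (n+1)) = ((n:ℚ)+1) • (g ^ n * d⁄dX A g) := by
  induction n with
  | zero => simp [pow_one]
  | succ n ih =>
    have : g ^ (n+2) = g * g ^ (n+1) := by ring
    rw [this, derivB_mul, ih]
    have h1 : g * ((n:ℚ)+1) • (g ^ n * d⁄dX A g) = ((n:ℚ)+1) • (g^(n+1) * d⁄dX A g) := by
      rw [mul_smul_comm]; ring_nf
    rw [h1]
    have h2 : g ^ (n+1) * d⁄dX A g = (1:ℚ) • (g^(n+1) * d⁄dX A g) := (one_smul _ _).symm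
    rw [h2]
    push_cast
    module

lemma deriv_partialSumExp (g : B) (N : ℕ) :
    d⁄dX A (partialSumExp g (N+1)) = d⁄dX A g * partialSumExp g N := by
  rw [partialSumExp, map_sum, Finset.sum_range_succ']
  have h0 : d⁄dX A (((Nat.factorial 0 : ℚ)⁻¹) • g ^ 0) = 0 := by
    rw [derivB_smul]; simp
  rw [h0, add_zero, partialSumExp, Finset.mul_sum]
  apply Finset.sum_congr rfl
  intro n _
  rw [derivB_smul, derivB_pow, smul_smul]
  have hfac : ((Nat.factorial (n+1) : ℚ))⁻¹ * ((n:ℚ)+1) = (Nat.factorial n : ℚ)⁻¹ := by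
    rw [Nat.factorial_succ]
    push_cast
    rw [mul_inv]
    field_simp
  have hrhs : (d⁄dX A) g * ((Nat.factorial n : ℚ)⁻¹ • g ^ n)
      = (Nat.factorial n : ℚ)⁻¹ • (g ^ n * d⁄dX A g) := by
    rw [mul_smul_comm, mul_comm]
  rw [hrhs, hfac]

lemma deriv_formalExp (g : B) (hg : constantCoeff (R := A) g = 0) :
    d⁄dX A (formalExp g) = d⁄dX A g * formalExp g := by
  ext d : 1
  rw [coeff_derivative]
  rw [coeff_formalExp_eq_partialSum g hg (lt_add_of_pos_right (d+1) (by norm_num) : d+1 < (d+1)+1)]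
  rw [← coeff_derivative, deriv_partialSumExp]
  rw [coeff_mul, coeff_mul]
  apply Finset.sum_congr rfl
  intro p hp
  rw [Finset.HasAntidiagonal.mem_antidiagonal] at hp
  congr 1
  rw [coeff_formalExp_eq_partialSum g hg (show p.2 < d+1 by omega)]



-- congruence machinery
lemma C_dvd_of_forall_coeff (a : A) (f : B) (h : ∀ j, a ∣ coeff (R := A) j f) : C (R := A) a ∣ f := by
  refine ⟨PowerSeries.mk fun j => (h j).choose, ?_⟩
  ext j : 1
  rw [coeff_C_mul, coeff_mk]
  exact (h j).choose_spec

lemma dvd_coeff_of_C_dvd {a : A} {f : B} (h : C (R := A) a ∣ f) (j : ℕ) : a ∣ coeff (R := A) j f := by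
  obtain ⟨t, rfl⟩ := h
  rw [coeff_C_mul]
  exact Dvd.intro _ rfl

lemma dvd_coeff_smul {a x : A} (c : ℚ) (h : a ∣ x) : a ∣ c • x := by
  obtain ⟨y, rfl⟩ := h
  exact ⟨c • y, (mul_smul_comm c a y).symm⟩


lemma formalExp_congr (g h : B) (a : A) (hd : C (R := A) a ∣ (g - h)) (j : ℕ) :
    a ∣ coeff (R := A) j (formalExp g - formalExp h) := by
  rw [map_sub]
  simp only [formalExp, coeff_mk]
  rw [← Finset.sum_sub_distrib]
  apply Finset.dvd_sum
  intro n _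
  rw [← smul_sub, ← map_sub]
  apply dvd_coeff_smul
  apply dvd_coeff_of_C_dvd
  exact dvd_trans (dvd_trans (sub_dvd_pow_sub_pow g h n) (dvd_refl _) |> fun _ => (dvd_trans hd (sub_dvd_pow_sub_pow g h n))) (dvd_refl _)

-- exp facts
lemma expX_eq_map : expX = PowerSeries.map (algebraMap ℚ A) (PowerSeries.exp ℚ) := by
  ext n
  rw [expX, coeff_mk, coeff_map, coeff_exp]
  rw [one_div]
  simp

lemma expNegX_eq_map :
    expNegX = PowerSeries.map (algebraMap ℚ A) (rescale (-1 : ℚ) (PowerSeries.exp ℚ)) := by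
  ext n
  rw [expNegX, coeff_mk, coeff_map, coeff_rescale, coeff_exp]
  simp [div_eq_mul_inv]

lemma expX_mul_expNegX : expX * expNegX = 1 := by
  rw [expX_eq_map, expNegX_eq_map, ← map_mul]
  rw [show PowerSeries.exp ℚ * rescale (-1 : ℚ) (PowerSeries.exp ℚ)
      = rescale (1 : ℚ) (PowerSeries.exp ℚ) * rescale (-1 : ℚ) (PowerSeries.exp ℚ) from by
    rw [rescale_one]; rfl]
  rw [exp_mul_exp_eq_exp_add]
  norm_num


lemma coeff_expX_pow (r j : ℕ) :
    coeff (R := A) j (expX ^ r) = algebraMap ℚ A ((r:ℚ)^j * ((j.factorial : ℚ))⁻¹) := by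
  rw [expX_eq_map, ← map_pow, coeff_map, exp_pow_eq_rescale_exp, coeff_rescale, coeff_exp]
  rw [one_div]
  simp

lemma coeff_expNegX_pow (r j : ℕ) :
    coeff (R := A) j (expNegX ^ r) = algebraMap ℚ A ((-1:ℚ)^j * (r:ℚ)^j * ((j.factorial : ℚ))⁻¹) := by
  rw [expNegX_eq_map, ← map_pow, coeff_map]
  have : (rescale (-1 : ℚ) (PowerSeries.exp ℚ)) ^ r = rescale (-1 : ℚ) ((PowerSeries.exp ℚ) ^ r) := by
    rw [map_pow]
  rw [this, exp_pow_eq_rescale_exp, coeff_rescale, coeff_rescale, coeff_exp]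
  rw [one_div]
  push_cast
  ring


/-- `wS n j = ∑_{r ≥ 1} r^j q^{n r}` -/
def wS (n j : ℕ) : A := PowerSeries.mk fun m => if n ∣ m ∧ m ≠ 0 then ((m / n : ℕ) : ℚ) ^ j else 0

def Pg (ε : ℚ) (n : ℕ) : B := PowerSeries.mk fun j => (ε^j * ((j.factorial : ℚ))⁻¹) • wS n j

lemma coeff_geom_pow (E : B) (ε : ℚ)
    (hE : ∀ r j : ℕ, coeff (R := A) j (E ^ r) = algebraMap ℚ A (ε^j * (r:ℚ)^j * ((j.factorial : ℚ))⁻¹))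
    (n r j : ℕ) :
    coeff (R := A) j ((C (R := A) ((X:A)^n) * E) ^ r)
      = (ε^j * ((r:ℚ))^j * ((j.factorial : ℚ))⁻¹) • (X:A)^(n*r) := by
  rw [mul_pow, ← map_pow, ← pow_mul, coeff_C_mul, hE r j]
  rw [Algebra.smul_def, mul_comm]

lemma geomdiff (n : ℕ) (hn : 1 ≤ n) (E : B) (ε : ℚ)
    (hE : ∀ r j : ℕ, coeff (R := A) j (E ^ r) = algebraMap ℚ A (ε^j * (r:ℚ)^j * ((j.factorial : ℚ))⁻¹))
    (R j : ℕ) :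
    (X:A)^(n*(R+1)) ∣ coeff (R := A) j (Pg ε n - ∑ r ∈ Finset.Icc 1 R, (C (R := A) ((X:A)^n) * E) ^ r) := by
  rw [X_pow_dvd_iff]
  intro m hm
  rw [map_sub, map_sum]
  simp only [coeff_geom_pow E ε hE n]
  rw [Pg, coeff_mk]
  rw [map_sub, coeff_smul, map_sum]
  simp only [coeff_smul, smul_eq_mul]
  rw [wS, coeff_mk]
  by_cases hc : n ∣ m ∧ m ≠ 0
  · obtain ⟨⟨r0, hr0⟩, hm0⟩ := hc
    have hr0' : m / n = r0 := by rw [hr0]; exact Nat.mul_div_cancel_left r0 (by omega)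
    have hr0pos : 1 ≤ r0 := by
      rcases Nat.eq_zero_or_pos r0 with h | h
      · subst h; simp at hr0; exact absurd hr0 hm0
      · exact h
    have hr0R : r0 ≤ R := by
      by_contra hcon
      push_neg at hcon
      have : m ≥ n * (R + 1) := by rw [hr0]; exact Nat.mul_le_mul_left n hcon
      omega
    rw [if_pos ⟨⟨r0, hr0⟩, hm0⟩, hr0']
    rw [Finset.sum_eq_single r0]
    · rw [coeff_X_pow, if_pos (by rw [hr0])]
      ring
    · intro r hr hne
      rw [coeff_X_pow, if_neg, mul_zero]
      intro h
      apply hne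
      have : n * r0 = n * r := by rw [← hr0, h]
      exact (Nat.eq_of_mul_eq_mul_left (by omega) this).symm
    · intro h
      exact absurd (Finset.mem_Icc.mpr ⟨hr0pos, hr0R⟩) h
  · rw [if_neg hc, mul_zero, zero_sub, neg_eq_zero]
    apply Finset.sum_eq_zero
    intro r hr
    rw [Finset.mem_Icc] at hr
    rw [coeff_X_pow, if_neg, mul_zero]
    intro h
    apply hc
    constructor
    · exact ⟨r, h⟩
    · subst h
      have := hr.1
      positivity

lemma geom_partial (x : B) (R : ℕ) :
    (∑ r ∈ Finset.Icc 1 R, x ^ r) * (1 - x) = x - x ^ (R+1) := by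
  induction R with
  | zero => simp
  | succ R ih =>
    rw [Finset.sum_Icc_succ_top (by omega)]
    ring_nf
    ring_nf at ih
    linear_combination ih

lemma dvd_coeff_smul' {a x : A} (c : ℚ) (h : a ∣ x) : a ∣ c • x := by
  obtain ⟨y, rfl⟩ := h
  exact ⟨c • y, (mul_smul_comm c a y).symm⟩

lemma Pg_mul (n : ℕ) (hn : 1 ≤ n) (E : B) (ε : ℚ)
    (hE : ∀ r j : ℕ, coeff (R := A) j (E ^ r) = algebraMap ℚ A (ε^j * (r:ℚ)^j * ((j.factorial : ℚ))⁻¹)) :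
    Pg ε n * (1 - C (R := A) ((X:A)^n) * E) = C (R := A) ((X:A)^n) * E := by
  set x := C (R := A) ((X:A)^n) * E with hx
  rw [← sub_eq_zero]
  ext j m
  rw [map_zero, map_zero]
  set R := m with hR
  have hrearr : Pg ε n * (1 - x) - x
      = (Pg ε n - ∑ r ∈ Finset.Icc 1 R, x ^ r) * (1 - x) - x ^ (R+1) := by
    have := geom_partial x R
    linear_combination this
  rw [hrearr]
  have hdvd : (X:A)^(n*(R+1)) ∣ coeff (R := A) j ((Pg ε n - ∑ r ∈ Finset.Icc 1 R, x ^ r) * (1 - x) - x ^ (R+1)) := by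
    rw [map_sub]
    apply dvd_sub
    · rw [coeff_mul]
      apply Finset.dvd_sum
      intro p _
      exact Dvd.dvd.mul_right (geomdiff n hn E ε hE R p.1) _
    · rw [hx, coeff_geom_pow E ε hE n (R+1) j]
      exact dvd_coeff_smul' _ dvd_rfl
  have hmlt : m < n * (R+1) := by
    have : R + 1 ≤ n * (R+1) := Nat.le_mul_of_pos_left _ (by omega)
    omega
  exact X_pow_dvd_iff.mp hdvd m hmlt
def δS (n : ℕ) : B := PowerSeries.mk fun j =>
  if 2 ≤ j ∧ j % 2 = 0 then (2 / (j.factorial : ℚ)) • wS n (j - 1) else 0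

lemma natCast_A_eq (k : ℕ) : ((k : ℕ) : A) = algebraMap ℚ A ((k : ℚ)) := by
  rw [map_natCast]

lemma mul_natCast_smul (f : A) (k : ℕ) : f * ((k:ℕ):A) = (k:ℚ) • f := by
  rw [natCast_A_eq, Algebra.smul_def, mul_comm]

lemma deriv_δS (n : ℕ) : d⁄dX A (δS n) = Pg 1 n - Pg (-1) n := by
  ext j : 1
  rw [coeff_derivative, map_sub]
  simp only [δS, Pg, coeff_mk]
  rcases Nat.even_or_odd j with hj | hj
  · have hj2 : j % 2 = 0 := Nat.even_iff.mp hj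
    have h1 : ¬(2 ≤ j+1 ∧ (j+1) % 2 = 0) := by omega
    rw [if_neg h1, zero_mul, hj.neg_pow, one_pow, sub_self]
  · have hj2 : j % 2 = 1 := Nat.odd_iff.mp hj
    have h1 : (2 ≤ j+1 ∧ (j+1) % 2 = 0) := by omega
    rw [if_pos h1]
    have h2 : j + 1 - 1 = j := rfl
    rw [h2]
    have h3 : ((j:A) + 1) = ((j+1 : ℕ) : A) := by push_cast; ring
    rw [h3, mul_natCast_smul, smul_smul, hj.neg_pow, one_pow]
    rw [← sub_smul]
    congr 1
    have hfac : ((j+1).factorial : ℚ) = ((j:ℚ)+1) * (j.factorial : ℚ) := by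
      rw [Nat.factorial_succ]; push_cast; ring
    have hne : ((j:ℚ)+1) ≠ 0 := by positivity
    have hne2 : (j.factorial : ℚ) ≠ 0 := Nat.cast_ne_zero.mpr (Nat.factorial_ne_zero j)
    rw [hfac]
    push_cast
    field_simp
    ring

lemma deriv_expX : d⁄dX A expX = expX := by
  ext j : 1
  rw [coeff_derivative, expX, coeff_mk, coeff_mk]
  have h3 : ((j:A) + 1) = ((j+1 : ℕ) : A) := by push_cast; ring
  rw [h3, natCast_A_eq, ← map_mul]
  congr 1
  rw [Nat.factorial_succ]
  have hne2 : (j.factorial : ℚ) ≠ 0 := Nat.cast_ne_zero.mpr (Nat.factorial_ne_zero j)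
  push_cast
  field_simp

lemma deriv_expNegX : d⁄dX A expNegX = -expNegX := by
  ext j : 1
  rw [coeff_derivative, expNegX, coeff_mk, map_neg, coeff_mk]
  have h3 : ((j:A) + 1) = ((j+1 : ℕ) : A) := by push_cast; ring
  rw [h3, natCast_A_eq, ← map_mul, ← map_neg]
  congr 1
  rw [Nat.factorial_succ]
  have hne2 : (j.factorial : ℚ) ≠ 0 := Nat.cast_ne_zero.mpr (Nat.factorial_ne_zero j)
  push_cast
  field_simp
  ring

lemma constantCoeff_expX : constantCoeff (R := A) expX = 1 := by
  rw [← coeff_zero_eq_constantCoeff_apply, expX, coeff_mk]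
  simp

lemma constantCoeff_expNegX : constantCoeff (R := A) expNegX = 1 := by
  rw [← coeff_zero_eq_constantCoeff_apply, expNegX, coeff_mk]
  simp

lemma constantCoeff_X_pow_A (n : ℕ) (hn : 1 ≤ n) : constantCoeff (R := ℚ) ((X:A)^n) = 0 := by
  rw [map_pow, constantCoeff_X, zero_pow (by omega)]

lemma isUnit_one_sub_X_pow (n : ℕ) (hn : 1 ≤ n) : IsUnit (1 - (X:A)^n) := by
  rw [PowerSeries.isUnit_iff_constantCoeff, map_sub, map_one, constantCoeff_X_pow_A n hn, sub_zero]
  exact isUnit_one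

lemma unit_factor_expX (n : ℕ) (hn : 1 ≤ n) : IsUnit (1 - C (R := A) ((X:A)^n) * expX) := by
  rw [PowerSeries.isUnit_iff_constantCoeff, map_sub, map_one, map_mul, constantCoeff_C,
    constantCoeff_expX, mul_one]
  exact isUnit_one_sub_X_pow n hn

lemma unit_factor_expNegX (n : ℕ) (hn : 1 ≤ n) : IsUnit (1 - C (R := A) ((X:A)^n) * expNegX) := by
  rw [PowerSeries.isUnit_iff_constantCoeff, map_sub, map_one, map_mul, constantCoeff_C,
    constantCoeff_expNegX, mul_one]
  exact isUnit_one_sub_X_pow n hn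

lemma hEP : ∀ r j : ℕ, coeff (R := A) j (expX ^ r)
    = algebraMap ℚ A ((1:ℚ)^j * (r:ℚ)^j * ((j.factorial : ℚ))⁻¹) := by
  intro r j
  rw [coeff_expX_pow, one_pow, one_mul]

lemma hEQ : ∀ r j : ℕ, coeff (R := A) j (expNegX ^ r)
    = algebraMap ℚ A ((-1:ℚ)^j * (r:ℚ)^j * ((j.factorial : ℚ))⁻¹) := by
  intro r j
  rw [coeff_expNegX_pow]

lemma derivB_one : d⁄dX A (1 : B) = 0 := by
  rw [← map_one (C (R := A)), derivative_C]

lemma deriv_v (n : ℕ) :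
    d⁄dX A ((1 - C (R := A) ((X:A)^n) * expX) * (1 - C (R := A) ((X:A)^n) * expNegX))
      = C (R := A) ((X:A)^n) * expNegX - C (R := A) ((X:A)^n) * expX := by
  rw [derivB_mul]
  have h1 : d⁄dX A (1 - C (R := A) ((X:A)^n) * expX) = -(C (R := A) ((X:A)^n) * expX) := by
    rw [map_sub, derivB_one, zero_sub, derivB_mul, derivative_C, deriv_expX, mul_zero,
      add_zero]
  have h2 : d⁄dX A (1 - C (R := A) ((X:A)^n) * expNegX) = C (R := A) ((X:A)^n) * expNegX := by
    rw [map_sub, derivB_one, zero_sub, derivB_mul, derivative_C, deriv_expNegX, mul_zero,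
      add_zero, mul_neg, neg_neg]
  rw [h1, h2]
  ring

lemma dδ_mul_v (n : ℕ) (hn : 1 ≤ n) :
    d⁄dX A (δS n) * ((1 - C (R := A) ((X:A)^n) * expX) * (1 - C (R := A) ((X:A)^n) * expNegX))
      = C (R := A) ((X:A)^n) * expX - C (R := A) ((X:A)^n) * expNegX := by
  rw [deriv_δS]
  have hP := Pg_mul n hn expX 1 hEP
  have hQ := Pg_mul n hn expNegX (-1) hEQ
  linear_combination (1 - C (R := A) ((X:A)^n) * expNegX) * hP - (1 - C (R := A) ((X:A)^n) * expX) * hQ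

lemma isUnit_v (n : ℕ) (hn : 1 ≤ n) :
    IsUnit ((1 - C (R := A) ((X:A)^n) * expX) * (1 - C (R := A) ((X:A)^n) * expNegX)) :=
  (unit_factor_expX n hn).mul (unit_factor_expNegX n hn)

lemma constantCoeff_v (n : ℕ) :
    constantCoeff (R := A) ((1 - C (R := A) ((X:A)^n) * expX) * (1 - C (R := A) ((X:A)^n) * expNegX))
      = (1 - (X:A)^n)^2 := by
  simp [constantCoeff_expX, constantCoeff_expNegX, sq]

lemma deriv_u (n : ℕ) (hn : 1 ≤ n) : d⁄dX A (u n) = d⁄dX A (δS n) * u n := by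
  have hvu := isUnit_v n hn
  have hw : Ring.inverse ((1 - C (R := A) ((X:A)^n) * expX) * (1 - C (R := A) ((X:A)^n) * expNegX))
      * ((1 - C (R := A) ((X:A)^n) * expX) * (1 - C (R := A) ((X:A)^n) * expNegX)) = 1 :=
    Ring.inverse_mul_cancel _ hvu
  have hdw := congrArg (d⁄dX A) hw
  rw [derivB_mul, derivB_one] at hdw
  have h1 : d⁄dX A (δS n) * ((1 - C (R := A) ((X:A)^n) * expX) * (1 - C (R := A) ((X:A)^n) * expNegX))
      = -(d⁄dX A ((1 - C (R := A) ((X:A)^n) * expX) * (1 - C (R := A) ((X:A)^n) * expNegX))) := by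
    rw [dδ_mul_v n hn, deriv_v n]
    ring
  apply hvu.mul_left_cancel
  rw [u, derivB_mul, derivative_C, mul_zero, add_zero]
  linear_combination (C (R := A) ((1 - (X:A)^n)^2)) * hdw
    - (C (R := A) ((1 - (X:A)^n)^2)
        * Ring.inverse ((1 - C (R := A) ((X:A)^n) * expX) * (1 - C (R := A) ((X:A)^n) * expNegX))) * h1

lemma constantCoeff_u (n : ℕ) (hn : 1 ≤ n) : constantCoeff (R := A) (u n) = 1 := by
  have hvu := isUnit_v n hn
  have hw : Ring.inverse ((1 - C (R := A) ((X:A)^n) * expX) * (1 - C (R := A) ((X:A)^n) * expNegX))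
      * ((1 - C (R := A) ((X:A)^n) * expX) * (1 - C (R := A) ((X:A)^n) * expNegX)) = 1 :=
    Ring.inverse_mul_cancel _ hvu
  have h := congrArg (constantCoeff (R := A)) hw
  rw [map_mul, map_one, constantCoeff_v n] at h
  rw [u, map_mul, constantCoeff_C]
  rw [mul_comm]
  exact h

-- ℚ⟦X⟧-level sinh lemma
def sQ : A := PowerSeries.mk fun j =>
  if j % 2 = 0 then ((1 : ℚ) / 2) ^ j / ((j + 1).factorial : ℚ) else 0

def bQ : A := PowerSeries.mk fun j =>
  if j % 2 = 1 then bernoulli (j+1) / ((j+1).factorial : ℚ) else 0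

lemma derivA_mul (f g : A) : d⁄dX ℚ (f*g) = f * d⁄dX ℚ g + g * d⁄dX ℚ f :=
  derivativeFun_mul f g

lemma deriv_rescale_exp (a : ℚ) :
    d⁄dX ℚ (rescale a (PowerSeries.exp ℚ)) = C (R := ℚ) a * rescale a (PowerSeries.exp ℚ) := by
  ext m
  rw [coeff_derivative, coeff_C_mul, coeff_rescale, coeff_rescale, coeff_exp, coeff_exp]
  have h1 : (((m+1).factorial : ℚ)) = ((m:ℚ)+1) * (m.factorial : ℚ) := by
    rw [Nat.factorial_succ]; push_cast; ring
  have hne : ((m:ℚ)+1) ≠ 0 := by positivity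
  have hne2 : (m.factorial : ℚ) ≠ 0 := Nat.cast_ne_zero.mpr (Nat.factorial_ne_zero m)
  simp only [Algebra.algebraMap_self_apply]
  rw [h1]
  field_simp
  ring

lemma hXsQ : (X:A) * sQ
    = rescale (2⁻¹ : ℚ) (PowerSeries.exp ℚ) - rescale (-2⁻¹ : ℚ) (PowerSeries.exp ℚ) := by
  ext m
  rw [map_sub, coeff_rescale, coeff_rescale, coeff_exp, mul_comm (X:A) sQ]
  simp only [Algebra.algebraMap_self_apply]
  cases m with
  | zero =>
    rw [PowerSeries.coeff_zero_mul_X]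
    norm_num
  | succ m =>
    rw [PowerSeries.coeff_succ_mul_X, sQ, coeff_mk]
    rcases Nat.even_or_odd m with hm | hm
    · have h2 : m % 2 = 0 := Nat.even_iff.mp hm
      rw [if_pos h2]
      have h3 : (-2⁻¹ : ℚ) ^ (m+1) = -((2⁻¹:ℚ)^(m+1)) := Odd.neg_pow (by
        rcases hm with ⟨k, hk⟩; exact ⟨k, by omega⟩) _
      rw [h3]
      have hne : (((m+1).factorial : ℚ)) ≠ 0 := Nat.cast_ne_zero.mpr (Nat.factorial_ne_zero _)
      field_simp
      ring
    · have h2 : ¬(m % 2 = 0) := by rw [Nat.odd_iff.mp hm]; norm_num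
      rw [if_neg h2]
      have h3 : (-2⁻¹ : ℚ) ^ (m+1) = (2⁻¹:ℚ)^(m+1) := Even.neg_pow (by
        rcases hm with ⟨k, hk⟩; exact ⟨k+1, by omega⟩) _
      rw [h3]
      ring

lemma hXbQ : (X:A) * bQ = bernoulliPowerSeries ℚ - 1 + C (R := ℚ) (2⁻¹:ℚ) * X := by
  ext m
  rw [map_add, map_sub, coeff_C_mul, coeff_X, mul_comm (X:A) bQ]
  rw [bernoulliPowerSeries, coeff_mk, coeff_one]
  simp only [Algebra.algebraMap_self_apply]
  cases m with
  | zero =>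
    rw [PowerSeries.coeff_zero_mul_X]
    norm_num
  | succ m =>
    rw [PowerSeries.coeff_succ_mul_X, bQ, coeff_mk]
    by_cases hm : m % 2 = 1
    · rw [if_pos hm]
      have h0 : ¬(m + 1 = 0) := by omega
      have h1 : ¬(m + 1 = 1) := by omega
      rw [if_neg h0, if_neg h1]
      ring
    · rw [if_neg hm]
      rcases Nat.eq_zero_or_pos m with h | h
      · subst h
        norm_num [bernoulli_one]
      · have h0 : ¬(m + 1 = 0) := by omega
        have h1 : ¬(m + 1 = 1) := by omega
        rw [if_neg h0, if_neg h1]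
        have hmeven : m % 2 = 0 := by omega
        have hb : bernoulli (m+1) = 0 := by
          rw [bernoulli_eq_bernoulli'_of_ne_one (by omega)]
          exact bernoulli'_eq_zero_of_odd ⟨m/2, by omega⟩ (by omega)
        rw [hb]
        norm_num

lemma sQ_deriv : d⁄dX ℚ sQ = bQ * sQ := by
  have hX2 : (X:A)^2 ≠ 0 := pow_ne_zero 2 PowerSeries.X_ne_zero
  apply mul_left_cancel₀ hX2
  have e1 := hXsQ
  have e2 := hXbQ
  have e3 := congrArg (d⁄dX ℚ) hXsQ
  rw [derivA_mul, derivative_X, mul_one, map_sub, deriv_rescale_exp, deriv_rescale_exp] at e3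
  have e7 : C (R := ℚ) (-2⁻¹ : ℚ) = -(C (R := ℚ) (2⁻¹:ℚ)) := by
    rw [show (-2⁻¹ : ℚ) = -(2⁻¹:ℚ) from by norm_num, map_neg]
  rw [e7] at e3
  have e4 : rescale (-2⁻¹ : ℚ) (PowerSeries.exp ℚ) * PowerSeries.exp ℚ
      = rescale (2⁻¹ : ℚ) (PowerSeries.exp ℚ) := by
    nth_rewrite 2 [show PowerSeries.exp ℚ = rescale (1:ℚ) (PowerSeries.exp ℚ) from by
      rw [rescale_one]; rfl]
    rw [exp_mul_exp_eq_exp_add]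
    norm_num
  have e5 := bernoulliPowerSeries_mul_exp_sub_one ℚ
  have e6 : (2:A) * C (R := ℚ) (2⁻¹:ℚ) = 1 := by
    rw [← map_ofNat (C (R := ℚ)) 2, ← map_mul]
    norm_num
  linear_combination (X:A) * e3 - ((X:A)*sQ) * e2
    + (-(bernoulliPowerSeries ℚ) - C (R := ℚ) (2⁻¹:ℚ) * X) * e1
    + (bernoulliPowerSeries ℚ) * e4 - (rescale (-2⁻¹ : ℚ) (PowerSeries.exp ℚ)) * e5
    + ((X:A) * rescale (-2⁻¹ : ℚ) (PowerSeries.exp ℚ)) * e6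

lemma derivative_mapQA (f : A) :
    d⁄dX A (PowerSeries.map (algebraMap ℚ A) f) = PowerSeries.map (algebraMap ℚ A) (d⁄dX ℚ f) := by
  ext m : 1
  rw [coeff_derivative, coeff_map, coeff_map, coeff_derivative, map_mul]
  congr 1
  push_cast
  simp

lemma sinh_eq_map : sinhSeries = PowerSeries.map (algebraMap ℚ A) sQ := by
  ext j : 1
  rw [sinhSeries, coeff_mk, coeff_map, sQ, coeff_mk]
  by_cases hj : j % 2 = 0
  · rw [if_pos hj, if_pos hj]
  · rw [if_neg hj, if_neg hj, map_zero]

def a0 : B := PowerSeries.mk fun j =>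
  if 2 ≤ j ∧ j % 2 = 0 then
    algebraMap ℚ A ((2 / (j.factorial : ℚ)) * (-(bernoulli j) / (2 * j))) else 0

lemma deriv_a0 : d⁄dX A a0 = - PowerSeries.map (algebraMap ℚ A) bQ := by
  ext j : 1
  rw [coeff_derivative, map_neg, coeff_map, a0, coeff_mk, bQ, coeff_mk]
  by_cases hj : j % 2 = 1
  · have h1 : 2 ≤ j+1 ∧ (j+1) % 2 = 0 := by omega
    rw [if_pos h1, if_pos hj]
    have h3 : ((j:A) + 1) = algebraMap ℚ A ((j:ℚ)+1) := by
      push_cast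
      simp
    rw [h3, ← map_mul, ← map_neg]
    congr 1
    have hfac : (((j+1).factorial : ℚ)) = ((j:ℚ)+1) * (j.factorial : ℚ) := by
      rw [Nat.factorial_succ]; push_cast; ring
    have hne : ((j:ℚ)+1) ≠ 0 := by positivity
    have hne2 : (j.factorial : ℚ) ≠ 0 := Nat.cast_ne_zero.mpr (Nat.factorial_ne_zero j)
    rw [hfac]
    push_cast
    field_simp
  · have h1 : ¬(2 ≤ j+1 ∧ (j+1) % 2 = 0) := by omega
    rw [if_neg h1, if_neg hj, zero_mul, map_zero, neg_zero]

lemma derivB_sinh : d⁄dX A sinhSeries = -(d⁄dX A a0) * sinhSeries := by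
  rw [sinh_eq_map, derivative_mapQA, sQ_deriv, map_mul, deriv_a0, neg_neg]

lemma constantCoeff_sinh : constantCoeff (R := A) sinhSeries = 1 := by
  rw [← coeff_zero_eq_constantCoeff_apply, sinhSeries, coeff_mk]
  norm_num

lemma isUnit_sinh : IsUnit sinhSeries := by
  rw [PowerSeries.isUnit_iff_constantCoeff, constantCoeff_sinh]
  exact isUnit_one

def argM (M : ℕ) : B := a0 + ∑ n ∈ Finset.Icc 1 M, δS n

lemma constantCoeff_a0 : constantCoeff (R := A) a0 = 0 := by
  rw [← coeff_zero_eq_constantCoeff_apply, a0, coeff_mk, if_neg (by omega)]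

lemma constantCoeff_δS (n : ℕ) : constantCoeff (R := A) (δS n) = 0 := by
  rw [← coeff_zero_eq_constantCoeff_apply, δS, coeff_mk, if_neg (by omega)]

lemma constantCoeff_argM (M : ℕ) : constantCoeff (R := A) (argM M) = 0 := by
  rw [argM, map_add, map_sum, constantCoeff_a0]
  rw [Finset.sum_congr rfl (fun n _ => constantCoeff_δS n)]
  simp

lemma deriv_argM (M : ℕ) :
    d⁄dX A (argM M) = d⁄dX A a0 + ∑ n ∈ Finset.Icc 1 M, d⁄dX A (δS n) := by
  rw [argM, map_add, map_sum]

lemma deriv_prod_u (M : ℕ) :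
    d⁄dX A (∏ n ∈ Finset.Icc 1 M, u n)
      = (∑ n ∈ Finset.Icc 1 M, d⁄dX A (δS n)) * ∏ n ∈ Finset.Icc 1 M, u n := by
  induction M with
  | zero =>
    rw [show Finset.Icc 1 0 = (∅ : Finset ℕ) from rfl]
    simp [derivB_one]
  | succ M ih =>
    rw [Finset.prod_Icc_succ_top (by omega), Finset.sum_Icc_succ_top (by omega), derivB_mul, ih,
      deriv_u (M+1) (by omega)]
    ring

lemma constantCoeff_prod_u (M : ℕ) : constantCoeff (R := A) (∏ n ∈ Finset.Icc 1 M, u n) = 1 := by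
  rw [map_prod]
  rw [Finset.prod_congr rfl (fun n hn => constantCoeff_u n (Finset.mem_Icc.mp hn).1)]
  simp

lemma main_identity (M : ℕ) :
    (∏ n ∈ Finset.Icc 1 M, u n) = sinhSeries * formalExp (argM M) := by
  apply eq_of_deriv_eq
  · rw [PowerSeries.isUnit_iff_constantCoeff, map_mul, constantCoeff_sinh,
      constantCoeff_formalExp, mul_one]
    exact isUnit_one
  · rw [deriv_prod_u M, derivB_mul sinhSeries (formalExp (argM M)),
      deriv_formalExp _ (constantCoeff_argM M), derivB_sinh, deriv_argM]
    ring
  · rw [constantCoeff_prod_u, map_mul, constantCoeff_sinh, constantCoeff_formalExp, mul_one]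

lemma expArg_sub_argM (M : ℕ) (j : ℕ) : (X:A)^(M+1) ∣ coeff (R := A) j (expArg - argM M) := by
  rw [X_pow_dvd_iff]
  intro m hm
  rw [map_sub, map_sub]
  have key : coeff (R := ℚ) m (coeff (R := A) j expArg) = coeff (R := ℚ) m (coeff (R := A) j (argM M)) := by
    rw [expArg, coeff_mk, argM, map_add, a0, coeff_mk, map_sum]
    by_cases hc : 2 ≤ j ∧ j % 2 = 0
    · rw [if_pos hc, if_pos hc]
      rw [Finset.sum_congr rfl (fun n _ => by rw [δS, coeff_mk, if_pos hc])]
      rw [coeff_smul, map_add, map_sum, smul_eq_mul, G, coeff_mk]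
      simp only [coeff_smul, smul_eq_mul]
      by_cases hm0 : m = 0
      · subst hm0
        rw [if_pos rfl]
        have hz : ∀ n ∈ Finset.Icc 1 M,
            (2 / (j.factorial:ℚ)) * coeff (R := ℚ) 0 (wS n (j-1)) = 0 := by
          intro n _
          rw [wS, coeff_mk, if_neg (by omega), mul_zero]
        rw [Finset.sum_congr rfl hz, Finset.sum_const_zero, add_zero]
        have : coeff (R := ℚ) 0 (algebraMap ℚ A (2 / (j.factorial:ℚ) * (-(bernoulli j) / (2 * j))))
            = 2 / (j.factorial:ℚ) * (-(bernoulli j) / (2 * j)) := by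
          rw [PowerSeries.algebraMap_apply]
          simp
        rw [this]
      · rw [if_neg hm0]
        have h1 : coeff (R := ℚ) m (algebraMap ℚ A (2 / (j.factorial:ℚ) * (-(bernoulli j) / (2 * j))))
            = 0 := by
          rw [PowerSeries.algebraMap_apply, Algebra.algebraMap_self_apply, coeff_C, if_neg hm0]
        rw [h1, zero_add, ← Finset.mul_sum]
        congr 1
        have hsub : m.divisors ⊆ Finset.Icc 1 M := by
          intro d hd
          rw [Nat.mem_divisors] at hd
          rw [Finset.mem_Icc]
          exact ⟨Nat.pos_of_dvd_of_pos hd.1 (Nat.pos_of_ne_zero hm0),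
            le_trans (Nat.le_of_dvd (Nat.pos_of_ne_zero hm0) hd.1) (by omega)⟩
        have hzero : ∀ n ∈ Finset.Icc 1 M, n ∉ m.divisors → coeff (R := ℚ) m (wS n (j-1)) = 0 := by
          intro n hn hnd
          rw [wS, coeff_mk, if_neg]
          intro hcon
          exact hnd (Nat.mem_divisors.mpr ⟨hcon.1, hcon.2⟩)
        rw [← Finset.sum_subset hsub hzero]
        have hvals : ∀ n ∈ m.divisors,
            coeff (R := ℚ) m (wS n (j-1)) = ((m / n : ℕ) : ℚ) ^ (j-1) := by
          intro n hn
          rw [wS, coeff_mk, if_pos ⟨(Nat.mem_divisors.mp hn).1, hm0⟩]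
        rw [Finset.sum_congr rfl hvals]
        exact (Nat.sum_div_divisors m (fun d => (d:ℚ)^(j-1))).symm
    · rw [if_neg hc, if_neg hc]
      rw [Finset.sum_congr rfl (fun n _ => by rw [δS, coeff_mk, if_neg hc])]
      simp
  rw [key, sub_self]

/-- in `A[[x]]` with `A = ℚ[[q]]`, the factors `1 - qⁿ·e^{±x}` (for `n ≥ 1`) and
`s(x) = sinh(x/2)/(x/2)` are invertible, and the infinite product
`s(x)⁻¹ · ∏_{n ≥ 1} (1-qⁿ)²·((1-qⁿeˣ)(1-qⁿe^{-x}))⁻¹` converges coefficientwise (each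
coefficient of `qᵐxʲ` of the partial products is eventually constant) with limit
`exp(G₂x² + ∑_{k ≥ 2} (2/(2k)!)·G_{2k}·x^{2k})`. -/
theorem witten_product_formula :
    IsUnit sinhSeries ∧
    (∀ n : ℕ, 1 ≤ n →
      IsUnit (1 - PowerSeries.C (R := A) (PowerSeries.X ^ n) * expX) ∧
      IsUnit (1 - PowerSeries.C (R := A) (PowerSeries.X ^ n) * expNegX)) ∧
    (∀ m j : ℕ, ∃ N : ℕ, ∀ M : ℕ, N ≤ M →
      PowerSeries.coeff (R := ℚ) m (PowerSeries.coeff (R := A) j (partialProd M)) =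
        PowerSeries.coeff (R := ℚ) m (PowerSeries.coeff (R := A) j (formalExp expArg))) := by
  refine ⟨isUnit_sinh, fun n hn => ⟨unit_factor_expX n hn, unit_factor_expNegX n hn⟩, ?_⟩
  intro m j
  refine ⟨m, fun M hM => ?_⟩
  rw [partialProd, main_identity M, ← mul_assoc, Ring.inverse_mul_cancel _ isUnit_sinh, one_mul]
  have hdvd := formalExp_congr expArg (argM M) ((X:A)^(M+1))
    (C_dvd_of_forall_coeff _ _ (expArg_sub_argM M)) j
  have h0 := X_pow_dvd_iff.mp hdvd m (by omega)
  rw [map_sub, map_sub] at h0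
  have := sub_eq_zero.mp h0
  rw [← this]
end
end
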